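/- arXiv:1802.06089 — 2 statements merged into one kernel-verified Lean document; each statement's English description precedes it below -/
import Mathlib

section
/- Let ρ₀ : [0, π] → ℝ be continuous, nonnegative, with ∫₀^π ρ₀(ξ) sin ξ dξ = 1/(2π) (unit total mass). Define, for t ≥ 0 and θ ∈ [0, π], c(θ,t) = 1 - 4π ∫₀^θ ρ₀(ξ) sin ξ dξ - e^{-t/(4π)} ∫₀^θ (1 - 4π ρ₀(ξ)) sin ξ dξ. Then c(θ,t) ∈ [-1, 1] for all θ and t, so λ(θ,t) = arccos(c(θ,t)) is well-defined. -/
open Real intervalIntegral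

/-- For a symmetric initial density `ρ₀` of unit total mass on the sphere, the quantity
`c(θ,t) = 1 - 4π ∫₀^θ ρ₀ sin - e^{-t/(4π)} ∫₀^θ (1 - 4π ρ₀) sin` lies in `[-1, 1]`, so the
flow-map angle `λ(θ,t) = arccos (c(θ,t))` is well-defined. -/
theorem sphere_flow_cos_in_Icc (ρ₀ : ℝ → ℝ)
    (hcont : ContinuousOn ρ₀ (Set.Icc 0 π))
    (hnonneg : ∀ ξ ∈ Set.Icc (0 : ℝ) π, 0 ≤ ρ₀ ξ)
    (hmass : ∫ ξ in (0 : ℝ)..π, ρ₀ ξ * Real.sin ξ = 1 / (2 * π)) :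
    ∀ t ≥ (0 : ℝ), ∀ θ ∈ Set.Icc (0 : ℝ) π,
      (1 - 4 * π * ∫ ξ in (0 : ℝ)..θ, ρ₀ ξ * Real.sin ξ)
        - Real.exp (-t / (4 * π)) * ∫ ξ in (0 : ℝ)..θ, (1 - 4 * π * ρ₀ ξ) * Real.sin ξ
      ∈ Set.Icc (-1 : ℝ) 1 := by
  intro t ht θ hθ
  obtain ⟨hθ0, hθπ⟩ := hθ
  have hπ : (0:ℝ) < π := Real.pi_pos
  have hcontf : ContinuousOn (fun ξ => ρ₀ ξ * Real.sin ξ) (Set.Icc 0 π) :=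
    hcont.mul Real.continuous_sin.continuousOn
  have hint : ∀ a b, a ∈ Set.Icc (0:ℝ) π → b ∈ Set.Icc (0:ℝ) π →
      IntervalIntegrable (fun ξ => ρ₀ ξ * Real.sin ξ) MeasureTheory.volume a b := by
    intro a b ha hb
    exact (hcontf.mono (Set.uIcc_subset_Icc ha hb)).intervalIntegrable
  set F : ℝ := ∫ ξ in (0:ℝ)..θ, ρ₀ ξ * Real.sin ξ with hF
  have hθmem : θ ∈ Set.Icc (0:ℝ) π := ⟨hθ0, hθπ⟩
  have h0mem : (0:ℝ) ∈ Set.Icc (0:ℝ) π := ⟨le_refl _, le_of_lt hπ⟩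
  have hπmem : π ∈ Set.Icc (0:ℝ) π := ⟨le_of_lt hπ, le_refl _⟩
  have hF0 : 0 ≤ F := by
    apply intervalIntegral.integral_nonneg hθ0
    intro ξ hξ
    have hξmem : ξ ∈ Set.Icc (0:ℝ) π := ⟨hξ.1, le_trans hξ.2 hθπ⟩
    exact mul_nonneg (hnonneg ξ hξmem) (Real.sin_nonneg_of_mem_Icc hξmem)
  have hF1 : F ≤ 1 / (2 * π) := by
    have hsplit : F + (∫ ξ in θ..π, ρ₀ ξ * Real.sin ξ) = 1 / (2 * π) := by
      rw [hF, intervalIntegral.integral_add_adjacent_intervals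
        (hint 0 θ h0mem hθmem) (hint θ π hθmem hπmem), hmass]
    have htail : 0 ≤ ∫ ξ in θ..π, ρ₀ ξ * Real.sin ξ := by
      apply intervalIntegral.integral_nonneg hθπ
      intro ξ hξ
      have hξmem : ξ ∈ Set.Icc (0:ℝ) π := ⟨le_trans hθ0 hξ.1, hξ.2⟩
      exact mul_nonneg (hnonneg ξ hξmem) (Real.sin_nonneg_of_mem_Icc hξmem)
    linarith
  have hsplit2 : (∫ ξ in (0:ℝ)..θ, (1 - 4 * π * ρ₀ ξ) * Real.sin ξ)
      = (1 - Real.cos θ) - 4 * π * F := by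
    have h1 : (∫ ξ in (0:ℝ)..θ, (1 - 4 * π * ρ₀ ξ) * Real.sin ξ)
        = (∫ ξ in (0:ℝ)..θ, Real.sin ξ - 4 * π * (ρ₀ ξ * Real.sin ξ)) := by
      congr 1; ext ξ; ring
    rw [h1, intervalIntegral.integral_sub (Real.continuous_sin.intervalIntegrable 0 θ)
        ((hint 0 θ h0mem hθmem).const_mul (4 * π)),
      intervalIntegral.integral_const_mul, integral_sin, Real.cos_zero, hF]
  rw [hsplit2]
  set s : ℝ := Real.exp (-t / (4 * π)) with hs
  have hs0 : 0 < s := Real.exp_pos _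
  have hs1 : s ≤ 1 := by
    apply Real.exp_le_one_iff.mpr
    apply div_nonpos_of_nonpos_of_nonneg (by linarith) (by linarith)
  have hA2 : 4 * π * F ≤ 2 := by
    have := mul_le_mul_of_nonneg_left hF1 (le_of_lt (by linarith : (0:ℝ) < 4 * π))
    have h2 : 4 * π * (1 / (2 * π)) = 2 := by field_simp; ring
    linarith
  have hA0 : 0 ≤ 4 * π * F := by positivity
  have hcos : -1 ≤ Real.cos θ ∧ Real.cos θ ≤ 1 := ⟨Real.neg_one_le_cos θ, Real.cos_le_one θ⟩
  constructor
  · nlinarith [hcos.1, hcos.2, mul_nonneg hs0.le (by linarith : (0:ℝ) ≤ 1 - Real.cos θ)]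
  · nlinarith [hcos.1, hcos.2]
end

section
/- For the hyperbolic-plane interaction potential K(θ) = -(1/(2π)) log tanh(θ/2) + 2 log cosh(θ/2), the radial force -K'(θ) = (1/(2π)) (1/sinh θ) - tanh(θ/2) vanishes exactly at θ* = arccosh(1 + 1/(2π)), is positive (repulsive) for 0 < θ < θ*, and negative (attractive) for θ > θ*. -/
/-!
Since `d/dθ log tanh (θ/2) = 1 / sinh θ` and `tanh (θ/2) = (cosh θ - 1) / sinh θ`, the force equals
`(c - cosh θ) / sinh θ` with `c = 1 + 1/(2π)`. For `θ > 0` we have `sinh θ > 0`, so its sign is that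
of `c - cosh θ`, and `cosh` is strictly increasing on `[0, ∞)` with `cosh (arcosh c) = c`.
-/

open Real

/-- Inverse hyperbolic cosine on `[1, ∞)`: `arcosh x = log (x + √(x² - 1))`. -/
noncomputable def Real.arcosh' (x : ℝ) : ℝ := Real.log (x + Real.sqrt (x ^ 2 - 1))

namespace Real

theorem arcosh'_eq_arcosh : arcosh' = arcosh := rfl

theorem cosh_lt_iff_lt_arcosh {x c : ℝ} (hx : 0 ≤ x) (hc : 1 ≤ c) :
    cosh x < c ↔ x < arcosh c := by
  conv_lhs => rw [← cosh_arcosh hc]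
  exact cosh_strictMonoOn.lt_iff_lt hx (arcosh_nonneg hc)

theorem lt_cosh_iff_arcosh_lt {x c : ℝ} (hx : 0 ≤ x) (hc : 1 ≤ c) :
    c < cosh x ↔ arcosh c < x := by
  conv_lhs => rw [← cosh_arcosh hc]
  exact cosh_strictMonoOn.lt_iff_lt (arcosh_nonneg hc) hx

theorem cosh_eq_iff_eq_arcosh {x c : ℝ} (hx : 0 ≤ x) (hc : 1 ≤ c) :
    cosh x = c ↔ x = arcosh c := by
  conv_lhs => rw [← cosh_arcosh hc]
  exact cosh_injOn.eq_iff hx (arcosh_nonneg hc)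

theorem tanh_half (x : ℝ) : tanh (x / 2) = (cosh x - 1) / sinh x := by
  obtain ⟨y, rfl⟩ : ∃ y, x = 2 * y := ⟨x / 2, by ring⟩
  rcases eq_or_ne y 0 with rfl | hy
  · simp
  have hs : sinh y ≠ 0 := by simpa using hy
  rw [mul_div_cancel_left₀ y two_ne_zero, sinh_two_mul, cosh_two_mul, tanh_eq_sinh_div_cosh]
  field_simp [(cosh_pos y).ne']
  linear_combination -cosh_sq_sub_sinh_sq y

end Real

theorem HasDerivAt.tanh {f : ℝ → ℝ} {f' x : ℝ} (hf : HasDerivAt f f' x) :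
    HasDerivAt (fun y => Real.tanh (f y)) (f' / Real.cosh (f x) ^ 2) x := by
  simp only [tanh_eq_sinh_div_cosh]
  refine (hf.sinh.div hf.cosh (cosh_pos _).ne').congr_deriv ?_
  congr 1
  linear_combination f' * cosh_sq_sub_sinh_sq (f x)

noncomputable def hyperbolicPotential (a θ : ℝ) : ℝ :=
  -a * log (tanh (θ / 2)) + 2 * log (cosh (θ / 2))

theorem hasDerivAt_log_tanh_half {x : ℝ} (hx : 0 < x) :
    HasDerivAt (fun t => log (tanh (t / 2))) (1 / sinh x) x := by
  refine ((HasDerivAt.tanh ((hasDerivAt_id' (x := x)).div_const 2)).log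
    (by rw [tanh_eq_sinh_div_cosh]; positivity)).congr_deriv ?_
  rw [show sinh x = 2 * sinh (x / 2) * cosh (x / 2) by rw [← sinh_two_mul]; ring_nf,
    tanh_eq_sinh_div_cosh]
  field_simp

theorem hasDerivAt_log_cosh_half (x : ℝ) :
    HasDerivAt (fun t => log (cosh (t / 2))) (tanh (x / 2) / 2) x := by
  refine ((HasDerivAt.cosh ((hasDerivAt_id' (x := x)).div_const 2)).log
    (cosh_pos (x / 2)).ne').congr_deriv ?_
  rw [tanh_eq_sinh_div_cosh]
  ring

theorem hasDerivAt_hyperbolicPotential (a : ℝ) {θ : ℝ} (hθ : 0 < θ) :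
    HasDerivAt (hyperbolicPotential a) (-((1 + a - cosh θ) / sinh θ)) θ := by
  refine (((hasDerivAt_log_tanh_half hθ).const_mul (-a)).add
    ((hasDerivAt_log_cosh_half θ).const_mul 2)).congr_deriv ?_
  rw [tanh_half]
  ring

/-- For the hyperbolic-plane potential `K(θ) = -(1/(2π)) log tanh(θ/2) + 2 log cosh(θ/2)`,
the radial force `-K'(θ)` equals `(1/(2π))(1/sinh θ) - tanh(θ/2)` for `θ > 0`; it vanishes
exactly at `θ* = arcosh(1 + 1/(2π))`, is positive (repulsive) for `0 < θ < θ*`, and negative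
(attractive) for `θ > θ*`. -/
theorem hyperbolic_potential_force (K : ℝ → ℝ)
    (hK : K = fun θ => -(1 / (2 * π)) * Real.log (Real.tanh (θ / 2))
      + 2 * Real.log (Real.cosh (θ / 2))) :
    (∀ θ > (0 : ℝ), -deriv K θ = (1 / (2 * π)) * (1 / Real.sinh θ) - Real.tanh (θ / 2)) ∧
    (∀ θ > (0 : ℝ), -deriv K θ = 0 ↔ θ = Real.arcosh' (1 + 1 / (2 * π))) ∧
    (∀ θ, 0 < θ → θ < Real.arcosh' (1 + 1 / (2 * π)) → 0 < -deriv K θ) ∧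
    (∀ θ, Real.arcosh' (1 + 1 / (2 * π)) < θ → -deriv K θ < 0) := by
  set c := 1 + 1 / (2 * π)
  have hc : 1 ≤ c := le_add_of_nonneg_right (by positivity)
  have hforce : ∀ θ > (0 : ℝ), -deriv K θ = (c - cosh θ) / sinh θ := fun θ hθ => by
    rw [hK]
    change -deriv (hyperbolicPotential (1 / (2 * π))) θ = _
    rw [(hasDerivAt_hyperbolicPotential (1 / (2 * π)) hθ).deriv, neg_neg]
  rw [arcosh'_eq_arcosh]
  refine ⟨fun θ hθ => ?_, fun θ hθ => ?_, fun θ hθ hlt => ?_, fun θ hlt => ?_⟩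
  · rw [hforce θ hθ, tanh_half]
    ring
  · rw [hforce θ hθ, div_eq_zero_iff, or_iff_left (sinh_pos_iff.2 hθ).ne', sub_eq_zero, eq_comm,
      cosh_eq_iff_eq_arcosh hθ.le hc]
  · rw [hforce θ hθ, div_pos_iff_of_pos_right (sinh_pos_iff.2 hθ), sub_pos,
      cosh_lt_iff_lt_arcosh hθ.le hc]
    exact hlt
  · have hθ : 0 < θ := (arcosh_nonneg hc).trans_lt hlt
    rw [hforce θ hθ]
    exact div_neg_of_neg_of_pos (sub_neg.2 ((lt_cosh_iff_arcosh_lt hθ.le hc).2 hlt))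
      (sinh_pos_iff.2 hθ)
end
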